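/- arXiv:2401.00667 — 7 statements merged into one kernel-verified Lean document; each statement's English description precedes it below -/
import Mathlib

section
/- Let θ be a random variable with support Θ, and let ψ be a random index with a well-defined joint distribution with θ. Suppose F_ψ : Θ → Θ is a measurable map that is bijective for each fixed value of ψ, and define θ* = F_ψ(θ). Let ψ' be a draw from the conditional distribution of ψ given θ* (implied by the joint distribution of (ψ, θ)). Then θ' = F_{ψ'}^{-1}(F_ψ(θ)) has the same distribution as θ. Moreover, if ψ' and ψ are conditionally independent given θ*, then θ' and θ are conditionally i.i.d. given θ*. -/
open MeasureTheory ProbabilityTheory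

section Aux

/-- Conditional expectation of the indicator of `V ∩ U` given `m'`, when `U` is
`m'`-measurable: pull out the indicator of `U`. -/
lemma aux_condexp_inter_right {Ω : Type*} {mΩ : MeasurableSpace Ω}
    {m' : MeasurableSpace Ω} (hm' : m' ≤ mΩ) {μ : @Measure Ω mΩ} [IsFiniteMeasure μ]
    {V U : Set Ω} (hV : MeasurableSet[mΩ] V) (hU : MeasurableSet[m'] U) :
    (μ⟦V ∩ U | m'⟧) =ᵐ[μ] U.indicator (μ⟦V | m'⟧) := by
  have h1 : Set.indicator (V ∩ U) (fun _ => (1 : ℝ))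
      = U.indicator (V.indicator fun _ => (1 : ℝ)) := by
    rw [Set.indicator_indicator, Set.inter_comm]
  rw [h1]
  have hint : Integrable (V.indicator fun _ => (1 : ℝ)) μ := by
    clear hU hm'; clear m'
    exact (integrable_const (1 : ℝ)).indicator hV
  exact condExp_indicator hint hU

/-- If `m₁` and `m₂` are conditionally independent given `m'`, then so are
`m₁ ⊔ m'` and `m₂ ⊔ m'`. -/
lemma aux_condIndep_sup_self {Ω : Type*} [mΩ : MeasurableSpace Ω] [StandardBorelSpace Ω]
    {m' m₁ m₂ : MeasurableSpace Ω} (hm' : m' ≤ mΩ) (h1 : m₁ ≤ mΩ) (h2 : m₂ ≤ mΩ)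
    (μ : @Measure Ω mΩ) [IsFiniteMeasure μ]
    (h : CondIndep m' m₁ m₂ hm' μ) :
    CondIndep m' (m₁ ⊔ m') (m₂ ⊔ m') hm' μ := by
  classical
  let p : MeasurableSpace Ω → Set (Set Ω) :=
    fun m => {u | ∃ A S, MeasurableSet[m] A ∧ MeasurableSet[m'] S ∧ u = A ∩ S}
  have hgen : ∀ m : MeasurableSpace Ω, m ⊔ m' = MeasurableSpace.generateFrom (p m) := by
    intro m
    refine le_antisymm (sup_le ?_ ?_) (MeasurableSpace.generateFrom_le ?_)
    · intro A hA
      exact MeasurableSpace.measurableSet_generateFrom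
        ⟨A, Set.univ, hA, MeasurableSet.univ, (Set.inter_univ A).symm⟩
    · intro S hS
      exact MeasurableSpace.measurableSet_generateFrom
        ⟨Set.univ, S, MeasurableSet.univ, hS, (Set.univ_inter S).symm⟩
    · rintro u ⟨A, S, hA, hS, rfl⟩
      exact ((le_sup_left : m ≤ m ⊔ m') A hA).inter ((le_sup_right : m' ≤ m ⊔ m') S hS)
  have hpi : ∀ m : MeasurableSpace Ω, IsPiSystem (p m) := by
    rintro m u ⟨A, S, hA, hS, rfl⟩ v ⟨B, T, hB, hT, rfl⟩ -
    exact ⟨A ∩ B, S ∩ T, hA.inter hB, hS.inter hT, Set.inter_inter_inter_comm A S B T⟩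
  have hmeas1 : ∀ u ∈ p m₁, MeasurableSet[mΩ] u := by
    rintro u ⟨A, S, hA, hS, rfl⟩; exact (h1 A hA).inter (hm' S hS)
  have hmeas2 : ∀ u ∈ p m₂, MeasurableSet[mΩ] u := by
    rintro u ⟨A, S, hA, hS, rfl⟩; exact (h2 A hA).inter (hm' S hS)
  refine CondIndepSets.condIndep (sup_le h1 hm') (sup_le h2 hm')
    (hpi m₁) (hpi m₂) (hgen m₁) (hgen m₂) ?_
  rw [condIndepSets_iff _ _ _ _ hmeas1 hmeas2]
  rintro t1 t2 ⟨A, S, hA, hS, rfl⟩ ⟨B, T, hB, hT, rfl⟩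
  have hAB : (μ⟦A ∩ B | m'⟧) =ᵐ[μ] (μ⟦A | m'⟧) * (μ⟦B | m'⟧) :=
    (condIndep_iff m' m₁ m₂ hm' h1 h2 μ).mp h A B hA hB
  have hinter : (A ∩ S) ∩ (B ∩ T) = (A ∩ B) ∩ (S ∩ T) := Set.inter_inter_inter_comm A S B T
  have hL : (μ⟦(A ∩ S) ∩ (B ∩ T) | m'⟧) =ᵐ[μ] (S ∩ T).indicator (μ⟦A ∩ B | m'⟧) := by
    rw [hinter]
    exact aux_condexp_inter_right hm' ((h1 A hA).inter (h2 B hB)) (hS.inter hT)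
  have hR1 : (μ⟦A ∩ S | m'⟧) =ᵐ[μ] S.indicator (μ⟦A | m'⟧) :=
    aux_condexp_inter_right hm' (h1 A hA) hS
  have hR2 : (μ⟦B ∩ T | m'⟧) =ᵐ[μ] T.indicator (μ⟦B | m'⟧) :=
    aux_condexp_inter_right hm' (h2 B hB) hT
  filter_upwards [hL, hR1, hR2, hAB] with ω hLω hR1ω hR2ω hABω
  rw [Pi.mul_apply, hLω, hR1ω, hR2ω, ← Set.inter_indicator_mul]
  simp only [Set.indicator_apply]
  split_ifs with hω
  · rw [hABω, Pi.mul_apply]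
  · rfl

end Aux

/-- Distribution-preserving mass-swapping transport: let `θ` be a `Θ`-valued random
variable, `ψ` a random index with a joint law with `θ`, and `F_ψ : Θ → Θ` a measurable
map, bijective for each fixed `ψ`.  Set `θ* = F_ψ(θ)`, and let `ψ'` be a draw from the
conditional distribution of `ψ` given `θ*` (expressed by the equality of the joint laws
of `(ψ', θ*)` and `(ψ, θ*)`).  Then `θ' = F_{ψ'}⁻¹(F_ψ(θ))` has the same distribution
as `θ`.  Moreover, if `ψ'` and `ψ` are conditionally independent given `θ*`, then `θ'`
and `θ` are conditionally i.i.d. given `θ*`: they are conditionally independent given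
`θ*` and have the same conditional distribution given `θ*`. -/
theorem warpU_stochastic_transport_preserves_distribution
    {Ω Θ I : Type*} [MeasurableSpace Ω] [StandardBorelSpace Ω] [Nonempty Ω]
    [MeasurableSpace Θ] [StandardBorelSpace Θ] [Nonempty Θ]
    [MeasurableSpace I]
    (P : Measure Ω) [IsProbabilityMeasure P]
    (F : I → Θ ≃ Θ)
    (hF : Measurable fun p : I × Θ => F p.1 p.2)
    (hFinv : Measurable fun p : I × Θ => (F p.1).symm p.2)
    (θ : Ω → Θ) (ψ ψ' : Ω → I)
    (hθ : Measurable θ) (hψ : Measurable ψ) (hψ' : Measurable ψ')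
    (θs : Ω → Θ) (hθs : θs = fun ω => F (ψ ω) (θ ω)) (hθsm : Measurable θs)
    -- ψ' is a draw from the conditional distribution of ψ given θ*
    (hcond : P.map (fun ω => (ψ' ω, θs ω)) = P.map (fun ω => (ψ ω, θs ω)))
    (θ' : Ω → Θ) (hθ' : θ' = fun ω => (F (ψ' ω)).symm (θs ω)) :
    P.map θ' = P.map θ ∧
      (CondIndepFun (MeasurableSpace.comap θs inferInstance)
          (measurable_iff_comap_le.mp hθsm) ψ' ψ P →
        CondIndepFun (MeasurableSpace.comap θs inferInstance)
          (measurable_iff_comap_le.mp hθsm) θ' θ P ∧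
        ∀ᵐ x ∂(P.map θs), condDistrib θ' θs P x = condDistrib θ θs P x) := by
  have hθeq : θ = fun ω => (F (ψ ω)).symm (θs ω) := by
    funext ω; rw [hθs]; simp
  set g : I × Θ → Θ := fun p => (F p.1).symm p.2 with hg
  have hΨ' : Measurable fun ω => (ψ' ω, θs ω) := hψ'.prodMk hθsm
  have hΨ : Measurable fun ω => (ψ ω, θs ω) := hψ.prodMk hθsm
  have hθ'g : θ' = g ∘ fun ω => (ψ' ω, θs ω) := hθ'
  have hθg : θ = g ∘ fun ω => (ψ ω, θs ω) := hθeq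
  have hmap1 : P.map θ' = P.map θ := by
    rw [hθ'g, hθg, ← Measure.map_map hFinv hΨ', ← Measure.map_map hFinv hΨ, hcond]
  refine ⟨hmap1, fun hpsi => ?_⟩
  constructor
  · -- conditional independence
    have hcomap : ∀ (f : Ω → I),
        MeasurableSpace.comap (fun ω => (f ω, θs ω)) inferInstance
          = MeasurableSpace.comap f inferInstance
            ⊔ MeasurableSpace.comap θs inferInstance := by
      intro f
      show MeasurableSpace.comap _ (MeasurableSpace.comap Prod.fst _
          ⊔ MeasurableSpace.comap Prod.snd _) = _
      rw [MeasurableSpace.comap_sup, MeasurableSpace.comap_comp,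
        MeasurableSpace.comap_comp]
      rfl
    rw [condIndepFun_iff_condIndep] at hpsi
    have hsup := aux_condIndep_sup_self (measurable_iff_comap_le.mp hθsm)
      (measurable_iff_comap_le.mp hψ') (measurable_iff_comap_le.mp hψ) P hpsi
    have hpair : CondIndepFun (MeasurableSpace.comap θs inferInstance)
        (measurable_iff_comap_le.mp hθsm)
        (fun ω => (ψ' ω, θs ω)) (fun ω => (ψ ω, θs ω)) P := by
      rw [condIndepFun_iff_condIndep, hcomap ψ', hcomap ψ]
      exact hsup
    have := hpair.comp (φ := g) (ψ := g) hFinv hFinv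
    rwa [← hθ'g, ← hθg] at this
  · -- equality of conditional distributions
    have hjoint : P.map (fun ω => (θs ω, θ' ω)) = P.map (fun ω => (θs ω, θ ω)) := by
      have hh : Measurable fun p : I × Θ => (p.2, (F p.1).symm p.2) :=
        measurable_snd.prodMk hFinv
      have e1 : (fun ω => (θs ω, θ' ω))
          = (fun p : I × Θ => (p.2, (F p.1).symm p.2)) ∘ fun ω => (ψ' ω, θs ω) := by
        rw [hθ']; rfl
      have e2 : (fun ω => (θs ω, θ ω))
          = (fun p : I × Θ => (p.2, (F p.1).symm p.2)) ∘ fun ω => (ψ ω, θs ω) := by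
        rw [hθeq]; rfl
      rw [e1, e2, ← Measure.map_map hh hΨ', ← Measure.map_map hh hΨ, hcond]
    have key : ∀ (ρ₁ ρ₂ : Measure (Θ × Θ)) [IsFiniteMeasure ρ₁] [IsFiniteMeasure ρ₂],
        ρ₁ = ρ₂ → ρ₁.condKernel = ρ₂.condKernel := by
      intro ρ₁ ρ₂ _ _ h; subst h; rfl
    haveI : IsProbabilityMeasure (P.map (fun ω => (θs ω, θ' ω))) :=
      Measure.isProbabilityMeasure_map (hθsm.prodMk (hθ' ▸ hFinv.comp hΨ')).aemeasurable
    haveI : IsProbabilityMeasure (P.map (fun ω => (θs ω, θ ω))) :=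
      Measure.isProbabilityMeasure_map (hθsm.prodMk hθ).aemeasurable
    have hcd : condDistrib θ' θs P = condDistrib θ θs P := by
      rw [condDistrib_def, condDistrib_def]
      exact key _ _ hjoint
    exact Filter.Eventually.of_forall fun x => by rw [hcd]
end

section
/- The Warp-U transformed density preserves the normalising constant: if q is an unnormalised density on ℝ^d with ∫ q = c, and φ_mix(θ) = Σ_{k=1}^K w_k |S_k^{-1}| φ(S_k^{-1}(θ - μ_k)) is a Gaussian mixture with positive weights summing to 1 and invertible scale matrices S_k, then the transformed function q̃(θ*) = Σ_{k=1}^K φ(θ*) · q(S_k θ* + μ_k)/φ_mix(S_k θ* + μ_k) · w_k satisfies ∫_{ℝ^d} q̃(θ*) dθ* = c. -/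
open MeasureTheory Matrix Real

/-!
Substituting `θ = S_k θ* + μ_k` in the `k`-th summand of `q̃` turns it into
`∫ w_k |det S_k⁻¹| φ(S_k⁻¹(θ - μ_k)) q(θ) / φ_mix(θ) dθ`: the Jacobian `|det S_k|` cancels the
factor `|det S_k⁻¹|`. Summed over `k`, the mixture components add up to `φ_mix`, which cancels
the denominator and leaves `∫ q = c`. Each piece is dominated by `|q|`, so all integrals are finite.
-/

section AffineChangeOfVariables

variable {ι : Type*} [Fintype ι] [DecidableEq ι] {A : Matrix ι ι ℝ}

theorem measurableEmbedding_mulVec_add (hA : IsUnit A.det) (b : ι → ℝ) :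
    MeasurableEmbedding fun x => A *ᵥ x + b := by
  have hinv : Function.LeftInverse (fun y => A⁻¹ *ᵥ (y - b)) fun x => A *ᵥ x + b := fun x => by
    simp [mulVec_mulVec, nonsing_inv_mul _ hA]
  have hsurj : Function.Surjective fun x => A *ᵥ x + b := fun y =>
    ⟨A⁻¹ *ᵥ (y - b), by simp [mulVec_mulVec, mul_nonsing_inv _ hA]⟩
  exact .of_measurable_inverse (by fun_prop) (by simp [hsurj.range_eq]) (by fun_prop) hinv

theorem map_mulVec_add_volume (hA : IsUnit A.det) (b : ι → ℝ) :
    Measure.map (fun x => A *ᵥ x + b) volume = ENNReal.ofReal |A.det|⁻¹ • volume := by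
  have hsplit : (fun x => A *ᵥ x + b) = (· + b) ∘ toLin' A := by
    funext x; simp
  rw [hsplit, ← Measure.map_map (measurable_add_const b)
      (toLin' A).continuous_of_finiteDimensional.measurable,
    Real.map_matrix_volume_pi_eq_smul_volume_pi hA.ne_zero, Measure.map_smul,
    (measurePreserving_add_right volume b).map_eq, abs_inv]

variable {F : Type*} [NormedAddCommGroup F]

theorem integral_comp_mulVec_add [NormedSpace ℝ F] (hA : IsUnit A.det) (b : ι → ℝ)
    (g : (ι → ℝ) → F) :
    ∫ x, g (A *ᵥ x + b) = |A.det|⁻¹ • ∫ y, g y := by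
  rw [← (measurableEmbedding_mulVec_add hA b).integral_map, map_mulVec_add_volume hA b,
    integral_smul_measure, ENNReal.toReal_ofReal (by positivity)]

theorem integrable_comp_mulVec_add_iff (hA : IsUnit A.det) (b : ι → ℝ) {g : (ι → ℝ) → F} :
    Integrable (fun x => g (A *ᵥ x + b)) ↔ Integrable g := by
  rw [← Function.comp_def, ← (measurableEmbedding_mulVec_add hA b).integrable_map_iff,
    map_mulVec_add_volume hA b,
    integrable_smul_measure (by simpa using hA.ne_zero) ENNReal.ofReal_ne_top]

end AffineChangeOfVariables

section MixturePartition

variable {α ι : Type*} [MeasurableSpace α] {μ : Measure α} {s : Finset ι} {p : ι → α → ℝ}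
  {q : α → ℝ}

theorem integrable_mul_div_sum (hp : ∀ k x, 0 ≤ p k x)
    (hpm : ∀ k, AEStronglyMeasurable (p k) μ) (hq : Integrable q μ) {k : ι} (hk : k ∈ s) :
    Integrable (fun x => p k x * q x / ∑ j ∈ s, p j x) μ := by
  have hsum_meas : AEMeasurable (fun x => ∑ j ∈ s, p j x) μ :=
    Finset.aemeasurable_fun_sum s fun j _ => (hpm j).aemeasurable
  refine hq.norm.mono'
    (((hpm k).aemeasurable.mul hq.1.aemeasurable).div hsum_meas).aestronglyMeasurable
    (.of_forall fun x => ?_)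
  have hsum_nonneg : 0 ≤ ∑ j ∈ s, p j x := Finset.sum_nonneg fun j _ => hp j x
  have hle : p k x / ∑ j ∈ s, p j x ≤ 1 :=
    div_le_one_of_le₀ (Finset.single_le_sum (fun j _ => hp j x) hk) hsum_nonneg
  calc ‖p k x * q x / ∑ j ∈ s, p j x‖ = (p k x / ∑ j ∈ s, p j x) * ‖q x‖ := by
        rw [mul_div_right_comm, norm_mul, Real.norm_of_nonneg (div_nonneg (hp k x) hsum_nonneg)]
    _ ≤ ‖q x‖ := mul_le_of_le_one_left (norm_nonneg _) hle

theorem sum_integral_mul_div_sum (hp : ∀ k x, 0 ≤ p k x)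
    (hpm : ∀ k, AEStronglyMeasurable (p k) μ) (hsum : ∀ x, ∑ j ∈ s, p j x ≠ 0) (hq : Integrable q μ) :
    ∑ k ∈ s, ∫ x, p k x * q x / ∑ j ∈ s, p j x ∂μ = ∫ x, q x ∂μ := by
  rw [← integral_finsetSum s fun k hk => integrable_mul_div_sum hp hpm hq hk]
  congr 1 with x
  rw [← Finset.sum_div, ← Finset.sum_mul, mul_div_cancel_left₀ _ (hsum x)]

end MixturePartition

theorem warpU_preserves_normalising_constant_general
    (d K : ℕ)
    (w : Fin K → ℝ) (hw : ∀ k, 0 ≤ w k)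
    (μv : Fin K → (Fin d → ℝ))
    (S : Fin K → Matrix (Fin d) (Fin d) ℝ) (hS : ∀ k, IsUnit (S k).det)
    (φ : (Fin d → ℝ) → ℝ)
    (hφ : φ = fun x => (2 * π) ^ (-(d : ℝ) / 2) * Real.exp (-(∑ i, x i ^ 2) / 2))
    (φmix : (Fin d → ℝ) → ℝ)
    (hφmix : φmix = fun θ => ∑ k, w k * |((S k)⁻¹).det| * φ ((S k)⁻¹.mulVec (θ - μv k)))
    (hφmixpos : ∀ θ, 0 < φmix θ)
    (q : (Fin d → ℝ) → ℝ)
    (hqi : Integrable q volume)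
    (c : ℝ) (hc : c = ∫ θ, q θ)
    (qt : (Fin d → ℝ) → ℝ)
    (hqt : qt = fun θs =>
      ∑ k, φ θs * (q ((S k).mulVec θs + μv k) / φmix ((S k).mulVec θs + μv k)) * w k) :
    ∫ θs, qt θs = c := by
  have hφ_nonneg : ∀ x, 0 ≤ φ x := fun x => by rw [hφ]; positivity
  have hφ_cont : Continuous φ := by rw [hφ]; fun_prop
  set p : Fin K → (Fin d → ℝ) → ℝ := fun k θ => w k * |((S k)⁻¹).det| * φ ((S k)⁻¹ *ᵥ (θ - μv k))
  have hp_nonneg : ∀ k θ, 0 ≤ p k θ := fun k θ =>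
    mul_nonneg (mul_nonneg (hw k) (abs_nonneg _)) (hφ_nonneg _)
  have hp_meas : ∀ k, AEStronglyMeasurable (p k) := fun k =>
    Continuous.aestronglyMeasurable (by fun_prop)
  have hφmix_eq : φmix = fun θ => ∑ k, p k θ := hφmix
  subst hφmix_eq hqt hc
  set r : Fin K → (Fin d → ℝ) → ℝ := fun k θ => p k θ * q θ / ∑ j, p j θ
  have hsummand : ∀ k θs, φ θs * (q (S k *ᵥ θs + μv k) / ∑ j, p j (S k *ᵥ θs + μv k)) * w k
      = |(S k).det| * r k (S k *ᵥ θs + μv k) := fun k θs => by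
    have hdet : |(S k).det| * |((S k)⁻¹).det| = 1 := by
      rw [← abs_mul, mul_comm, det_nonsing_inv_mul_det _ (hS k), abs_one]
    have hp_pull : p k (S k *ᵥ θs + μv k) = w k * |((S k)⁻¹).det| * φ θs := by
      simp only [p, add_sub_cancel_right, mulVec_mulVec, nonsing_inv_mul _ (hS k), one_mulVec]
    simp only [r, hp_pull]
    linear_combination -(φ θs * (q (S k *ᵥ θs + μv k) / ∑ j, p j (S k *ᵥ θs + μv k)) * w k) * hdet
  have hr_int : ∀ k, Integrable (r k) := fun k =>
    integrable_mul_div_sum hp_nonneg hp_meas hqi (Finset.mem_univ k)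
  calc ∫ θs, ∑ k, φ θs * (q (S k *ᵥ θs + μv k) / ∑ j, p j (S k *ᵥ θs + μv k)) * w k
      = ∫ θs, ∑ k, |(S k).det| * r k (S k *ᵥ θs + μv k) := by simp only [hsummand]
    _ = ∑ k, ∫ θs, |(S k).det| * r k (S k *ᵥ θs + μv k) := integral_finsetSum _ fun k _ =>
        ((integrable_comp_mulVec_add_iff (hS k) (μv k)).mpr (hr_int k)).const_mul _
    _ = ∑ k, ∫ θ, r k θ := Finset.sum_congr rfl fun k _ => by
        rw [integral_const_mul, integral_comp_mulVec_add (hS k), smul_eq_mul, ← mul_assoc,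
          mul_inv_cancel₀ (abs_ne_zero.mpr (hS k).ne_zero), one_mul]
    _ = ∫ θ, q θ := sum_integral_mul_div_sum hp_nonneg hp_meas (fun θ => (hφmixpos θ).ne') hqi

/-- The Warp-U transformed density preserves the normalising constant: if `q` is an
unnormalised density on `ℝ^d` with `∫ q = c`, and
`φ_mix(θ) = ∑ₖ w_k |det S_k⁻¹| φ(S_k⁻¹(θ − μ_k))` is an everywhere-positive Gaussian
mixture with nonnegative weights summing to 1 and invertible scale matrices `S_k`, then
`q̃(θ*) = ∑ₖ φ(θ*) · q(S_k θ* + μ_k)/φ_mix(S_k θ* + μ_k) · w_k` satisfies `∫ q̃ = c`. -/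
theorem warpU_preserves_normalising_constant
    (d K : ℕ) (hd : 0 < d) (hK : 0 < K)
    (w : Fin K → ℝ) (hw : ∀ k, 0 ≤ w k) (hwsum : ∑ k, w k = 1)
    (μv : Fin K → (Fin d → ℝ))
    (S : Fin K → Matrix (Fin d) (Fin d) ℝ) (hS : ∀ k, IsUnit (S k).det)
    (φ : (Fin d → ℝ) → ℝ)
    (hφ : φ = fun x => (2 * π) ^ (-(d : ℝ) / 2) * Real.exp (-(∑ i, x i ^ 2) / 2))
    (φmix : (Fin d → ℝ) → ℝ)
    (hφmix : φmix = fun θ => ∑ k, w k * |((S k)⁻¹).det| * φ ((S k)⁻¹.mulVec (θ - μv k)))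
    (hφmixpos : ∀ θ, 0 < φmix θ)
    (q : (Fin d → ℝ) → ℝ) (hq : ∀ θ, 0 ≤ q θ) (hqm : Measurable q)
    (hqi : Integrable q volume)
    (c : ℝ) (hc : c = ∫ θ, q θ)
    (qt : (Fin d → ℝ) → ℝ)
    (hqt : qt = fun θs =>
      ∑ k, φ θs * (q ((S k).mulVec θs + μv k) / φmix ((S k).mulVec θs + μv k)) * w k) :
    ∫ θs, qt θs = c :=
  warpU_preserves_normalising_constant_general d K w hw μv S hS φ hφ φmix hφmix hφmixpos q hqi c hc
    qt hqt
end

section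
/- Conditional law of the warped sample given the index: let θ ~ π = q/c on ℝ^d, sample ψ = k with probability ϖ(k|θ) = φ^{(k)}(θ)/φ_mix(θ) where φ^{(k)}(θ) = w_k |S_k^{-1}| φ(S_k^{-1}(θ - μ_k)), and set θ* = S_ψ^{-1}(θ - μ_ψ). Then P(ψ = k) = w_k c_k / c and the conditional density of θ* given ψ = k equals p̃_k(θ*) = q̃_k(θ*)/c_k, where q̃_k(θ*) = φ(θ*) q(S_k θ* + μ_k)/φ_mix(S_k θ* + μ_k). -/
/-!
Substituting `θ = S_k θ* + μ_k` (Jacobian `|det S_k|`) turns the density `ϖ(k|θ) π(θ)` into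
`|det S_k| w_k |det S_k⁻¹| φ(θ*) q(θ)/(φ_mix(θ) c) = w_k q̃_k(θ*)/c`. This measure is finite
because `ϖ ≤ 1` and `q` is integrable, so its mass is `w_k ∫ q̃_k / c = w_k c_k / c`.
-/

open MeasureTheory Matrix Real
open scoped ENNReal

lemma map_withDensity_of_leftInverse {α β : Type*} [MeasurableSpace α] [MeasurableSpace β]
    {μ : Measure α} {f : α → β} {g : β → α} (hf : Measurable f) (hg : Measurable g)
    (hgf : Function.LeftInverse g f) {ρ : α → ℝ≥0∞} (hρ : Measurable ρ) :
    (μ.withDensity ρ).map f = (μ.map f).withDensity (ρ ∘ g) := by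
  ext s hs
  rw [Measure.map_apply hf hs, withDensity_apply _ (hf hs), withDensity_apply _ hs,
    setLIntegral_map hs (hρ.comp hg) hf]
  simp only [Function.comp_apply, hgf _]

lemma withDensity_ofReal_univ_eq_integral {α : Type*} [MeasurableSpace α] {μ : Measure α}
    {f : α → ℝ} (hfm : AEStronglyMeasurable f μ) (hf : 0 ≤ᵐ[μ] f)
    (hfin : μ.withDensity (fun x => ENNReal.ofReal (f x)) Set.univ ≠ ∞) :
    μ.withDensity (fun x => ENNReal.ofReal (f x)) Set.univ = ENNReal.ofReal (∫ x, f x ∂μ) := by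
  rw [withDensity_apply _ MeasurableSet.univ, Measure.restrict_univ] at hfin ⊢
  exact (ofReal_integral_eq_lintegral_ofReal
    ((lintegral_ofReal_ne_top_iff_integrable hfm hf).mp hfin) hf).symm

lemma withDensity_ofReal_mul_div_eq_normalized {α : Type*} [MeasurableSpace α]
    {μ : Measure α} {g : α → ℝ} {a b Z : ℝ}
    (hmass : μ.withDensity (fun x => ENNReal.ofReal (a * g x / b)) Set.univ =
      ENNReal.ofReal (a * Z / b)) :
    μ.withDensity (fun x => ENNReal.ofReal (a * g x / b)) =
      μ.withDensity fun x => ENNReal.ofReal (a * Z / b * (g x / Z)) := by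
  -- if `Z = 0`, the right-hand density is `0` (as `x / 0 = 0`) and the left has mass `0`
  rcases eq_or_ne Z 0 with rfl | hZ
  · rw [mul_zero, zero_div, ENNReal.ofReal_zero, Measure.measure_univ_eq_zero] at hmass
    simp [hmass]
  · congr 1 with x
    congr 1
    field_simp

lemma norm_div_sum_le_one {ι : Type*} [Fintype ι] {a : ι → ℝ} (ha : ∀ i, 0 ≤ a i) (k : ι) :
    ‖a k / ∑ i, a i‖ ≤ 1 := by
  have hsum : 0 ≤ ∑ i, a i := Finset.sum_nonneg fun i _ => ha i
  rw [Real.norm_of_nonneg (div_nonneg (ha k) hsum)]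
  exact div_le_one_of_le₀ (Finset.single_le_sum (fun i _ => ha i) (Finset.mem_univ k)) hsum

section Affine

variable {ι : Type*} [Fintype ι] [DecidableEq ι] {M : Matrix ι ι ℝ} (m : ι → ℝ)

lemma mulVec_inv_mulVec_sub_add (hM : IsUnit M.det) (x : ι → ℝ) :
    M *ᵥ (M⁻¹ *ᵥ (x - m)) + m = x := by
  rw [mulVec_mulVec, mul_nonsing_inv M hM, one_mulVec, sub_add_cancel]

lemma inv_mulVec_mulVec_add_sub (hM : IsUnit M.det) (y : ι → ℝ) :
    M⁻¹ *ᵥ (M *ᵥ y + m - m) = y := by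
  rw [add_sub_cancel_right, mulVec_mulVec, nonsing_inv_mul M hM, one_mulVec]

lemma map_volume_inv_mulVec_sub (hM : IsUnit M.det) :
    volume.map (fun x => M⁻¹ *ᵥ (x - m)) = ENNReal.ofReal |M.det| • volume := by
  have hdet : M⁻¹.det ≠ 0 := (isUnit_nonsing_inv_det M hM).ne_zero
  have hcomp : (fun x => M⁻¹ *ᵥ (x - m)) = toLin' M⁻¹ ∘ fun x => x - m := rfl
  rw [hcomp, ← Measure.map_map (by fun_prop) (by fun_prop),
    (measurePreserving_sub_right volume m).map_eq,
    Real.map_matrix_volume_pi_eq_smul_volume_pi hdet,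
    eq_inv_of_mul_eq_one_left (M.det_nonsing_inv_mul_det hM), inv_inv]

lemma map_withDensity_inv_mulVec_sub (hM : IsUnit M.det) {ρ : (ι → ℝ) → ℝ≥0∞}
    (hρ : Measurable ρ) :
    (volume.withDensity ρ).map (fun x => M⁻¹ *ᵥ (x - m)) =
      volume.withDensity fun y => ENNReal.ofReal |M.det| * ρ (M *ᵥ y + m) := by
  rw [map_withDensity_of_leftInverse (by fun_prop) (by fun_prop)
    (g := fun y => M *ᵥ y + m)
    (mulVec_inv_mulVec_sub_add m hM) hρ, map_volume_inv_mulVec_sub m hM,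
    withDensity_smul_measure, ← withDensity_smul _ (hρ.comp (by fun_prop))]
  rfl

lemma abs_det_mul_abs_det_inv (hM : IsUnit M.det) : |M.det| * |M⁻¹.det| = 1 := by
  rw [← abs_mul, mul_comm, M.det_nonsing_inv_mul_det hM, abs_one]

lemma map_withDensity_responsibility_eq (hM : IsUnit M.det) {φ φmix q : (ι → ℝ) → ℝ}
    (hφ : Measurable φ) (hφmix : Measurable φmix) (hq : Measurable q) (w c : ℝ) :
    (volume.withDensity fun θ =>
        ENNReal.ofReal (w * |M⁻¹.det| * φ (M⁻¹ *ᵥ (θ - m)) / φmix θ * (q θ / c))).map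
        (fun θ => M⁻¹ *ᵥ (θ - m)) =
      volume.withDensity fun y =>
        ENNReal.ofReal (w * (φ y * (q (M *ᵥ y + m) / φmix (M *ᵥ y + m))) / c) := by
  rw [map_withDensity_inv_mulVec_sub m hM (by fun_prop)]
  congr 1 with y
  rw [← ENNReal.ofReal_mul (abs_nonneg _), inv_mulVec_mulVec_add_sub m hM]
  congr 1
  linear_combination (w * φ y / φmix (M *ᵥ y + m) * (q (M *ᵥ y + m) / c)) *
    abs_det_mul_abs_det_inv hM

end Affine

/-- The sub-probability law of `θ*` on the event `{ψ = k}` is modelled as the pushforward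
under `F k` of the measure with density `ϖ k · π`. -/
theorem warpU_conditional_law_general
    (d K : ℕ)
    (w : Fin K → ℝ) (hw : ∀ k, 0 ≤ w k)
    (μv : Fin K → (Fin d → ℝ))
    (S : Fin K → Matrix (Fin d) (Fin d) ℝ) (hS : ∀ k, IsUnit (S k).det)
    (φ : (Fin d → ℝ) → ℝ)
    (hφ : φ = fun x => (2 * π) ^ (-(d : ℝ) / 2) * Real.exp (-(∑ i, x i ^ 2) / 2))
    (φcomp : Fin K → (Fin d → ℝ) → ℝ)
    (hφcomp : φcomp = fun k θ => w k * |((S k)⁻¹).det| * φ ((S k)⁻¹.mulVec (θ - μv k)))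
    (φmix : (Fin d → ℝ) → ℝ) (hφmix : φmix = fun θ => ∑ k, φcomp k θ)
    (hφmixpos : ∀ θ, 0 < φmix θ)
    (ϖ : Fin K → (Fin d → ℝ) → ℝ) (hϖ : ϖ = fun k θ => φcomp k θ / φmix θ)
    (q : (Fin d → ℝ) → ℝ) (hq : ∀ θ, 0 ≤ q θ) (hqm : Measurable q)
    (hqi : Integrable q volume)
    (c : ℝ) (hcpos : 0 < c)
    (F : Fin K → (Fin d → ℝ) → (Fin d → ℝ))
    (hF : F = fun k θ => (S k)⁻¹.mulVec (θ - μv k))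
    (qtk : Fin K → (Fin d → ℝ) → ℝ)
    (hqtk : qtk = fun k θs =>
      φ θs * (q ((S k).mulVec θs + μv k) / φmix ((S k).mulVec θs + μv k)))
    (ck : Fin K → ℝ) (hck : ∀ k, ck k = ∫ θs, qtk k θs) :
    ∀ k : Fin K,
      ((volume.withDensity fun θ => ENNReal.ofReal (ϖ k θ * (q θ / c))).map (F k))
          Set.univ = ENNReal.ofReal (w k * ck k / c) ∧
      ((volume.withDensity fun θ => ENNReal.ofReal (ϖ k θ * (q θ / c))).map (F k))
        = volume.withDensity fun θs =>
            ENNReal.ofReal ((w k * ck k / c) * (qtk k θs / ck k)) := by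
  intro k
  have hφ_nonneg : ∀ x, 0 ≤ φ x := fun x => by rw [hφ]; positivity
  have hφm : Measurable φ := by rw [hφ]; fun_prop
  have hφmixm : Measurable φmix := by subst hφmix hφcomp; fun_prop
  have hϖm : Measurable (ϖ k) := by subst hϖ hφcomp; fun_prop
  have hϖ_le : ∀ θ, ‖ϖ k θ‖ ≤ 1 := fun θ => by
    simp only [hϖ, hφmix]
    exact norm_div_sum_le_one (a := fun j => φcomp j θ) (fun j => by
      rw [hφcomp]; exact mul_nonneg (mul_nonneg (hw j) (abs_nonneg _)) (hφ_nonneg _)) k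
  have hlaw : (volume.withDensity fun θ => ENNReal.ofReal (ϖ k θ * (q θ / c))).map (F k) =
      volume.withDensity fun y => ENNReal.ofReal (w k * qtk k y / c) := by
    simpa only [hϖ, hφcomp, hF, hqtk] using
      map_withDensity_responsibility_eq (μv k) (hS k) hφm hφmixm hqm (w k) c
  have hfin : (volume.withDensity fun y => ENNReal.ofReal (w k * qtk k y / c)) Set.univ ≠ ∞ := by
    have := isFiniteMeasure_withDensity_ofReal
      ((hqi.div_const c).bdd_mul hϖm.aestronglyMeasurable (ae_of_all _ hϖ_le)).2
    exact hlaw ▸ measure_ne_top _ _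
  have hqtkm : Measurable (qtk k) := by rw [hqtk]; fun_prop
  have hqtk_nonneg : ∀ y, 0 ≤ qtk k y := fun y => by
    rw [hqtk]; exact mul_nonneg (hφ_nonneg y) (div_nonneg (hq _) (hφmixpos _).le)
  have hmass : (volume.withDensity fun y => ENNReal.ofReal (w k * qtk k y / c)) Set.univ =
      ENNReal.ofReal (w k * ck k / c) := by
    rw [hck, ← integral_const_mul, ← integral_div]
    exact withDensity_ofReal_univ_eq_integral (by fun_prop)
      (ae_of_all _ fun y => div_nonneg (mul_nonneg (hw k) (hqtk_nonneg y)) hcpos.le) hfin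
  rw [hlaw]
  exact ⟨hmass, withDensity_ofReal_mul_div_eq_normalized hmass⟩

/-- Conditional law of the warped sample given the index: let `θ ~ π = q/c` on `ℝ^d`,
sample `ψ = k` with probability `ϖ(k|θ) = φ^{(k)}(θ)/φ_mix(θ)`, and set
`θ* = S_ψ⁻¹(θ − μ_ψ)`.  Then `P(ψ = k) = w_k c_k / c` and the conditional density of
`θ*` given `ψ = k` is `p̃_k = q̃_k / c_k`.  Formally, the sub-probability law of `θ*` on
the event `{ψ = k}` — namely the pushforward under `F_k` of the measure with density
`θ ↦ ϖ(k|θ) π(θ)` — has total mass `w_k c_k / c` and equals `(w_k c_k / c)` times the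
probability measure with density `p̃_k`. -/
theorem warpU_conditional_law
    (d K : ℕ) (hd : 0 < d) (hK : 0 < K)
    (w : Fin K → ℝ) (hw : ∀ k, 0 ≤ w k) (hwsum : ∑ k, w k = 1)
    (μv : Fin K → (Fin d → ℝ))
    (S : Fin K → Matrix (Fin d) (Fin d) ℝ) (hS : ∀ k, IsUnit (S k).det)
    (φ : (Fin d → ℝ) → ℝ)
    (hφ : φ = fun x => (2 * π) ^ (-(d : ℝ) / 2) * Real.exp (-(∑ i, x i ^ 2) / 2))
    (φcomp : Fin K → (Fin d → ℝ) → ℝ)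
    (hφcomp : φcomp = fun k θ => w k * |((S k)⁻¹).det| * φ ((S k)⁻¹.mulVec (θ - μv k)))
    (φmix : (Fin d → ℝ) → ℝ) (hφmix : φmix = fun θ => ∑ k, φcomp k θ)
    (hφmixpos : ∀ θ, 0 < φmix θ)
    (ϖ : Fin K → (Fin d → ℝ) → ℝ) (hϖ : ϖ = fun k θ => φcomp k θ / φmix θ)
    (q : (Fin d → ℝ) → ℝ) (hq : ∀ θ, 0 ≤ q θ) (hqm : Measurable q)
    (hqi : Integrable q volume)
    (c : ℝ) (hc : c = ∫ θ, q θ) (hcpos : 0 < c)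
    (F : Fin K → (Fin d → ℝ) → (Fin d → ℝ))
    (hF : F = fun k θ => (S k)⁻¹.mulVec (θ - μv k))
    (qtk : Fin K → (Fin d → ℝ) → ℝ)
    (hqtk : qtk = fun k θs =>
      φ θs * (q ((S k).mulVec θs + μv k) / φmix ((S k).mulVec θs + μv k)))
    (ck : Fin K → ℝ) (hck : ∀ k, ck k = ∫ θs, qtk k θs) :
    ∀ k : Fin K,
      ((volume.withDensity fun θ => ENNReal.ofReal (ϖ k θ * (q θ / c))).map (F k))
          Set.univ = ENNReal.ofReal (w k * ck k / c) ∧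
      ((volume.withDensity fun θ => ENNReal.ofReal (ϖ k θ * (q θ / c))).map (F k))
        = volume.withDensity fun θs =>
            ENNReal.ofReal ((w k * ck k / c) * (qtk k θs / ck k)) :=
  warpU_conditional_law_general d K w hw μv S hS φ hφ φcomp hφcomp φmix hφmix hφmixpos ϖ hϖ q hq hqm
    hqi c hcpos F hF qtk hqtk ck hck
end

section
/- Distributional normalisation of the mixture: if θ ~ φ_mix, where φ_mix(θ) = Σ_{k=1}^K w_k |S_k^{-1}| φ(S_k^{-1}(θ - μ_k)), and the index ψ is sampled from ϖ(ψ|θ) = φ^{(ψ)}(θ)/φ_mix(θ), then the transformed variable F_ψ(θ) = S_ψ^{-1}(θ - μ_ψ) follows the standard Gaussian distribution N_d(0, I). -/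
open MeasureTheory Matrix Real
open scoped ENNReal

lemma map_withDensity_comp' {α β : Type*} [MeasurableSpace α] [MeasurableSpace β]
    (μ : Measure α) {T : α → β} (hT : Measurable T) {f : β → ℝ≥0∞} (hf : Measurable f) :
    (μ.withDensity (fun a => f (T a))).map T = (μ.map T).withDensity f := by
  ext s hs
  rw [Measure.map_apply hT hs, withDensity_apply _ (hT hs), withDensity_apply _ hs,
    Measure.restrict_map hT hs, lintegral_map hf hT]

/-- Distributional normalisation of the mixture: if `θ ~ φ_mix`, where
`φ_mix(θ) = ∑ₖ w_k |det S_k⁻¹| φ(S_k⁻¹(θ − μ_k))`, and the index `ψ` is sampled from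
`ϖ(ψ|θ) = φ^{(ψ)}(θ)/φ_mix(θ)`, then the transformed variable `F_ψ(θ) = S_ψ⁻¹(θ − μ_ψ)`
follows the standard Gaussian distribution `N_d(0, I)`.  Formally: the joint law of
`(ψ, θ)` has, for each `k`, the `θ`-marginal on `{ψ = k}` given by the density
`φ^{(k)}`, and the sum over `k` of the pushforwards under `F_k` is the measure with
density `φ`. -/
theorem warpU_distributional_normalisation
    (d K : ℕ) (hd : 0 < d) (hK : 0 < K)
    (w : Fin K → ℝ) (hw : ∀ k, 0 ≤ w k) (hwsum : ∑ k, w k = 1)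
    (μv : Fin K → (Fin d → ℝ))
    (S : Fin K → Matrix (Fin d) (Fin d) ℝ) (hS : ∀ k, IsUnit (S k).det)
    (φ : (Fin d → ℝ) → ℝ)
    (hφ : φ = fun x => (2 * π) ^ (-(d : ℝ) / 2) * Real.exp (-(∑ i, x i ^ 2) / 2))
    (φcomp : Fin K → (Fin d → ℝ) → ℝ)
    (hφcomp : φcomp = fun k θ => w k * |((S k)⁻¹).det| * φ ((S k)⁻¹.mulVec (θ - μv k)))
    (F : Fin K → (Fin d → ℝ) → (Fin d → ℝ))
    (hF : F = fun k θ => (S k)⁻¹.mulVec (θ - μv k)) :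
    (Measure.sum fun k : Fin K =>
        (volume.withDensity fun θ => ENNReal.ofReal (φcomp k θ)).map (F k))
      = volume.withDensity fun x => ENNReal.ofReal (φ x) := by
  have hφpos : ∀ x, 0 ≤ φ x := by
    intro x; rw [hφ]
    positivity
  have hφm : Measurable φ := by
    rw [hφ]
    fun_prop
  have key : ∀ k : Fin K,
      (volume.withDensity fun θ => ENNReal.ofReal (φcomp k θ)).map (F k)
        = volume.withDensity fun x => ENNReal.ofReal (w k * φ x) := by
    intro k
    have hdetS : (S k).det ≠ 0 := (hS k).ne_zero
    have hdet : ((S k)⁻¹).det ≠ 0 := by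
      rw [Matrix.det_nonsing_inv, Ring.inverse_eq_inv']
      exact inv_ne_zero hdetS
    -- F k as composition of translation and linear map
    have hFk : F k = (Matrix.toLin' ((S k)⁻¹)) ∘ (fun θ => θ - μv k) := by
      funext θ
      simp [hF, Matrix.toLin'_apply]
    have hlin : Measurable (Matrix.toLin' ((S k)⁻¹) : (Fin d → ℝ) → (Fin d → ℝ)) :=
      (Matrix.toLin' ((S k)⁻¹)).continuous_of_finiteDimensional.measurable
    have hsub : Measurable (fun θ : Fin d → ℝ => θ - μv k) :=
      measurable_id.sub_const _
    have hFm : Measurable (F k) := by rw [hFk]; exact hlin.comp hsub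
    have hfm : Measurable (fun x : Fin d → ℝ => ENNReal.ofReal (w k * |((S k)⁻¹).det| * φ x)) := by
      fun_prop
    have hcomp : (fun θ => ENNReal.ofReal (φcomp k θ))
        = fun θ => ENNReal.ofReal (w k * |((S k)⁻¹).det| * φ (F k θ)) := by
      funext θ; rw [hφcomp, hF]
    rw [hcomp, map_withDensity_comp' volume hFm hfm]
    have hmapvol : volume.map (F k) = ENNReal.ofReal |((S k)⁻¹).det|⁻¹ • volume := by
      rw [hFk, ← Measure.map_map hlin hsub]
      have htrans : Measure.map (fun θ : Fin d → ℝ => θ - μv k) volume = volume :=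
        (measurePreserving_sub_right volume (μv k)).map_eq
      rw [htrans, Real.map_matrix_volume_pi_eq_smul_volume_pi hdet, abs_inv]
    rw [hmapvol, withDensity_smul_measure]
    rw [← withDensity_smul' _ _ (by simp)]
    congr 1
    funext x
    simp only [Pi.smul_apply, smul_eq_mul]
    rw [← ENNReal.ofReal_mul (by positivity)]
    rw [mul_comm (w k) |((S k)⁻¹).det|, mul_assoc, inv_mul_cancel_left₀ (abs_ne_zero.mpr hdet)]
  simp_rw [key]
  rw [← withDensity_tsum (fun k => by fun_prop)]
  congr 1
  rw [tsum_fintype]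
  funext x
  rw [Finset.sum_apply,
    ← ENNReal.ofReal_sum_of_nonneg (fun k _ => mul_nonneg (hw k) (hφpos x)),
    ← Finset.sum_mul, hwsum, one_mul]
end

section
/- Transported-mass decomposition: with π_{ψ',ψ}(θ) = π(G_{ψ',ψ}^{-1}(θ)) · |det D(G_{ψ',ψ}^{-1})(θ)| · p(ψ',ψ | G_{ψ',ψ}^{-1}(θ)), where G_{ψ',ψ} = H_{ψ'} ∘ F_ψ with F_ψ(θ) = S_ψ^{-1}(θ - μ_ψ), H_{ψ'}(θ*) = S_{ψ'}θ* + μ_{ψ'}, and p(ψ',ψ|ξ) = ϖ(ψ|ξ)·ν(ψ'|F_ψ(ξ)), it holds that π(θ) = Σ_{ψ=1}^K Σ_{ψ'=1}^K π_{ψ',ψ}(θ) for all θ. -/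
open MeasureTheory Matrix Real

/-!
Swap the two sums and fix `ψ'`. Every `G_{ψ',ψ}⁻¹(θ)` is `H_ψ(ξ)` for the same `ξ = F_{ψ'}(θ)`,
and `F_ψ` sends it back to `ξ`, so the factor `ν(ψ'|ξ)` is common to all terms of the inner sum.
The remaining factors `ϖ(ψ|H_ψ ξ) q(H_ψ ξ) |det S_ψ|` are exactly the unnormalised weights
defining `ν(·|ξ)`, so the inner sum collapses to the `ψ'`-th weight, which is
`ϖ(ψ'|θ) q(θ) |det S_{ψ'}|`. Summing `ϖ(ψ'|θ) π(θ)` over `ψ'` then gives `π(θ)`.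
-/

namespace Matrix

variable {n α : Type*} [Fintype n] [DecidableEq n] [CommRing α] {A : Matrix n n α}

theorem inv_mulVec_mulVec_add_sub (hA : IsUnit A.det) (x μ : n → α) :
    A⁻¹ *ᵥ (A *ᵥ x + μ - μ) = x := by
  rw [add_sub_cancel_right, mulVec_mulVec, nonsing_inv_mul _ hA, one_mulVec]

theorem mulVec_inv_mulVec_sub_add (hA : IsUnit A.det) (x μ : n → α) :
    A *ᵥ (A⁻¹ *ᵥ (x - μ)) + μ = x := by
  rw [mulVec_mulVec, mul_nonsing_inv _ hA, one_mulVec, sub_add_cancel]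

end Matrix

section

variable {ι 𝕜 : Type*} [Field 𝕜] [LinearOrder 𝕜] [IsStrictOrderedRing 𝕜]

/-- When the total mass vanishes so does every weight, so the junk value `a i / 0 = 0`
is harmless. -/
theorem Finset.sum_mul_div_sum_of_nonneg (s : Finset ι) {a : ι → 𝕜} (ha : ∀ j ∈ s, 0 ≤ a j)
    {i : ι} (hi : i ∈ s) : (∑ j ∈ s, a j) * (a i / ∑ j ∈ s, a j) = a i := by
  by_cases hzero : ∑ j ∈ s, a j = 0
  · rw [hzero, zero_mul, (Finset.sum_eq_zero_iff_of_nonneg ha).1 hzero i hi]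
  · exact mul_div_cancel₀ _ hzero

theorem sum_transported_mul_normalized_weight {X : Type*} [Fintype ι] {F H : ι → X → X}
    (hFH : ∀ k x, F k (H k x) = x) (hHF : ∀ k x, H k (F k x) = x)
    {ϖ : ι → X → 𝕜} (hϖ : ∀ k x, 0 ≤ ϖ k x) {q : X → 𝕜} (hq : ∀ x, 0 ≤ q x)
    {J : ι → 𝕜} (hJ : ∀ k, 0 < J k) {ν : ι → X → 𝕜}
    (hν : ∀ k ξ, ν k ξ = ϖ k (H k ξ) * q (H k ξ) * J k / ∑ j, ϖ j (H j ξ) * q (H j ξ) * J j)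
    (c : 𝕜) (i : ι) (θ : X) :
    ∑ k, q (H k (F i θ)) / c * (J k / J i) * (ϖ k (H k (F i θ)) * ν i (F k (H k (F i θ)))) =
      ϖ i θ * (q θ / c) := by
  set ξ := F i θ
  set a : ι → 𝕜 := fun k => ϖ k (H k ξ) * q (H k ξ) * J k with ha
  calc _ = ∑ k, a k * (a i / ∑ j, a j) / (c * J i) := by
        refine Finset.sum_congr rfl fun k _ => ?_
        simp only [hFH, hν, ha]
        ring
    _ = (∑ j, a j) * (a i / ∑ j, a j) / (c * J i) := by
        rw [← Finset.sum_div, ← Finset.sum_mul]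
    _ = ϖ i θ * (q θ / c) := by
        rw [Finset.sum_mul_div_sum_of_nonneg _
          (fun k _ => mul_nonneg (mul_nonneg (hϖ _ _) (hq _)) (hJ k).le) (Finset.mem_univ _)]
        simp only [ξ, hHF]
        field_simp [(hJ i).ne']

end

theorem warpU_transported_mass_decomposition_general
    (d K : ℕ)
    (w : Fin K → ℝ) (hw : ∀ k, 0 ≤ w k)
    (μv : Fin K → (Fin d → ℝ))
    (S : Fin K → Matrix (Fin d) (Fin d) ℝ) (hS : ∀ k, IsUnit (S k).det)
    (φ : (Fin d → ℝ) → ℝ)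
    (hφ : φ = fun x => (2 * π) ^ (-(d : ℝ) / 2) * Real.exp (-(∑ i, x i ^ 2) / 2))
    (φcomp : Fin K → (Fin d → ℝ) → ℝ)
    (hφcomp : φcomp = fun k θ => w k * |((S k)⁻¹).det| * φ ((S k)⁻¹.mulVec (θ - μv k)))
    (φmix : (Fin d → ℝ) → ℝ) (hφmix : φmix = fun θ => ∑ k, φcomp k θ)
    (hφmixpos : ∀ θ, 0 < φmix θ)
    (ϖ : Fin K → (Fin d → ℝ) → ℝ) (hϖ : ϖ = fun k θ => φcomp k θ / φmix θ)
    (q : (Fin d → ℝ) → ℝ) (hq : ∀ θ, 0 ≤ q θ)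
    (c : ℝ)
    (πf : (Fin d → ℝ) → ℝ) (hπf : πf = fun θ => q θ / c)
    (F H : Fin K → (Fin d → ℝ) → (Fin d → ℝ))
    (hF : F = fun k θ => (S k)⁻¹.mulVec (θ - μv k))
    (hH : H = fun k θs => (S k).mulVec θs + μv k)
    (ν : Fin K → (Fin d → ℝ) → ℝ)
    (hν : ν = fun k θs =>
      (ϖ k (H k θs) * q (H k θs) * |(S k).det|) /
        (∑ j, ϖ j (H j θs) * q (H j θs) * |(S j).det|))
    (Ginv : Fin K → Fin K → (Fin d → ℝ) → (Fin d → ℝ))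
    (hGinv : Ginv = fun ψ' ψ θ => H ψ (F ψ' θ)) :
    ∀ θ, πf θ = ∑ ψ, ∑ ψ',
        πf (Ginv ψ' ψ θ) * (|(S ψ).det| / |(S ψ').det|) *
          (ϖ ψ (Ginv ψ' ψ θ) * ν ψ' (F ψ (Ginv ψ' ψ θ))) := by
  intro θ
  have hFH : ∀ k x, F k (H k x) = x := fun k x => by
    simp only [hF, hH, inv_mulVec_mulVec_add_sub (hS k)]
  have hHF : ∀ k x, H k (F k x) = x := fun k x => by
    simp only [hF, hH, mulVec_inv_mulVec_sub_add (hS k)]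
  have hϖ_nonneg : ∀ k x, 0 ≤ ϖ k x := fun k x => by
    subst hϖ hφcomp hφ
    exact div_nonneg (by have := hw k; positivity) (hφmixpos x).le
  have hϖ_sum : ∑ k, ϖ k θ = 1 := by
    simp only [hϖ]
    rw [← Finset.sum_div, ← congrFun hφmix θ, div_self (hφmixpos θ).ne']
  have hJ : ∀ k, 0 < |(S k).det| := fun k => abs_pos.2 (hS k).ne_zero
  simp only [hπf, hGinv]
  rw [Finset.sum_comm, Finset.sum_congr rfl fun ψ' _ =>
    sum_transported_mul_normalized_weight hFH hHF hϖ_nonneg hq hJ (congrFun₂ hν) c ψ' θ,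
    ← Finset.sum_mul, hϖ_sum, one_mul]

/-- Transported-mass decomposition: with
`π_{ψ',ψ}(θ) = π(G_{ψ',ψ}⁻¹(θ)) · |det D(G_{ψ',ψ}⁻¹)(θ)| · p(ψ',ψ | G_{ψ',ψ}⁻¹(θ))`,
where `G_{ψ',ψ} = H_{ψ'} ∘ F_ψ`, `F_ψ(θ) = S_ψ⁻¹(θ − μ_ψ)`, `H_{ψ'}(θ*) = S_{ψ'}θ* + μ_{ψ'}`,
`p(ψ',ψ|ξ) = ϖ(ψ|ξ)·ν(ψ'|F_ψ(ξ))`, and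
`ν(ψ'|θ*) ∝ ϖ(ψ'|H_{ψ'}(θ*)) q(H_{ψ'}(θ*)) |det S_{ψ'}|` (normalised over `ψ'`),
it holds that `π(θ) = ∑_ψ ∑_{ψ'} π_{ψ',ψ}(θ)` for all `θ`.  The Jacobian of
`G_{ψ',ψ}⁻¹` is `|det S_ψ|/|det S_{ψ'}|`. -/
theorem warpU_transported_mass_decomposition
    (d K : ℕ) (hd : 0 < d) (hK : 0 < K)
    (w : Fin K → ℝ) (hw : ∀ k, 0 ≤ w k) (hwsum : ∑ k, w k = 1)
    (μv : Fin K → (Fin d → ℝ))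
    (S : Fin K → Matrix (Fin d) (Fin d) ℝ) (hS : ∀ k, IsUnit (S k).det)
    (φ : (Fin d → ℝ) → ℝ)
    (hφ : φ = fun x => (2 * π) ^ (-(d : ℝ) / 2) * Real.exp (-(∑ i, x i ^ 2) / 2))
    (φcomp : Fin K → (Fin d → ℝ) → ℝ)
    (hφcomp : φcomp = fun k θ => w k * |((S k)⁻¹).det| * φ ((S k)⁻¹.mulVec (θ - μv k)))
    (φmix : (Fin d → ℝ) → ℝ) (hφmix : φmix = fun θ => ∑ k, φcomp k θ)
    (hφmixpos : ∀ θ, 0 < φmix θ)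
    (ϖ : Fin K → (Fin d → ℝ) → ℝ) (hϖ : ϖ = fun k θ => φcomp k θ / φmix θ)
    (q : (Fin d → ℝ) → ℝ) (hq : ∀ θ, 0 ≤ q θ) (hqi : Integrable q volume)
    (c : ℝ) (hc : c = ∫ θ, q θ) (hcpos : 0 < c)
    (πf : (Fin d → ℝ) → ℝ) (hπf : πf = fun θ => q θ / c)
    (F H : Fin K → (Fin d → ℝ) → (Fin d → ℝ))
    (hF : F = fun k θ => (S k)⁻¹.mulVec (θ - μv k))
    (hH : H = fun k θs => (S k).mulVec θs + μv k)
    (ν : Fin K → (Fin d → ℝ) → ℝ)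
    (hν : ν = fun k θs =>
      (ϖ k (H k θs) * q (H k θs) * |(S k).det|) /
        (∑ j, ϖ j (H j θs) * q (H j θs) * |(S j).det|))
    (Ginv : Fin K → Fin K → (Fin d → ℝ) → (Fin d → ℝ))
    (hGinv : Ginv = fun ψ' ψ θ => H ψ (F ψ' θ)) :
    ∀ θ, πf θ = ∑ ψ, ∑ ψ',
        πf (Ginv ψ' ψ θ) * (|(S ψ).det| / |(S ψ').det|) *
          (ϖ ψ (Ginv ψ' ψ θ) * ν ψ' (F ψ (Ginv ψ' ψ θ))) :=
  warpU_transported_mass_decomposition_general d K w hw μv S hS φ hφ φcomp hφcomp φmix hφmix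
    hφmixpos ϖ hϖ q hq c πf hπf F H hF hH ν hν Ginv hGinv
end

section
/- Reducibility of pure Warp-U moves with equal unit scales: suppose φ_mix(θ) = (1/K) Σ_{k=1}^K φ(θ − μ_k) (all scale matrices equal to the identity). Then each composed transformation G_{ψ',ψ}(θ) = θ − μ_ψ + μ_{ψ'} is a translation, and for any starting point θ_0 the chain generated by repeatedly applying G_{ψ',ψ} (without any Metropolis step) can only visit points of the lattice set {θ : θ = θ_0 + j_1 μ_1 + ... + j_K μ_K, j_1,...,j_K ∈ ℤ}. In particular, if the target π has compact support Ω, the chain can visit only finitely many points and cannot converge in total variation to π for any θ_0. -/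
/-!
Each `G_{ψ',ψ}` is the translation by `μ_{ψ'} - μ_ψ`, so every point of the chain differs from
`θ₀` by an element of the `ℤ`-span of the `μ_k`: the chain lives on a countable lattice. A
non-atomic `π` gives that lattice mass `0`, while any law concentrated on it gives it mass `1`,
so the total variation distance between the two is at least `1` forever.
-/

open MeasureTheory Filter

section AffineLattice

variable {ι E : Type*} [Fintype ι] [AddCommGroup E] [Module ℝ E]

def affineLattice (θ₀ : E) (μ : ι → E) : Set E :=
  {θ | ∃ j : ι → ℤ, θ = θ₀ + ∑ k, (j k : ℝ) • μ k}

lemma affineLattice_eq_range (θ₀ : E) (μ : ι → E) :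
    affineLattice θ₀ μ = Set.range fun j : ι → ℤ => θ₀ + ∑ k, (j k : ℝ) • μ k := by
  ext θ
  simp [affineLattice, eq_comm]

lemma countable_affineLattice (θ₀ : E) (μ : ι → E) : (affineLattice θ₀ μ).Countable := by
  rw [affineLattice_eq_range]
  exact Set.countable_range _

lemma mem_affineLattice_iff {θ₀ θ : E} {μ : ι → E} :
    θ ∈ affineLattice θ₀ μ ↔ θ - θ₀ ∈ Submodule.span ℤ (Set.range μ) := by
  simp only [affineLattice, Set.mem_ofPred_eq, Submodule.mem_span_range_iff_exists_fun,
    Int.cast_smul_eq_zsmul, eq_sub_iff_add_eq, eq_comm (b := θ), add_comm θ₀]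

lemma orbit_mem_affineLattice {θ₀ : E} {μ : ι → E} (a b : ℕ → ι) {orbit : ℕ → E}
    (h₀ : orbit 0 = θ₀) (hstep : ∀ t, orbit (t + 1) = orbit t - μ (a t) + μ (b t)) :
    ∀ t, orbit t ∈ affineLattice θ₀ μ := by
  intro t
  rw [mem_affineLattice_iff]
  induction t with
  | zero => simp [h₀]
  | succ t ih =>
    have hshift : orbit (t + 1) - θ₀ = (orbit t - θ₀) - μ (a t) + μ (b t) := by
      rw [hstep]; abel
    rw [hshift]
    exact add_mem (sub_mem ih (Submodule.subset_span ⟨a t, rfl⟩))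
      (Submodule.subset_span ⟨b t, rfl⟩)

end AffineLattice

section TotalVariation

variable {α : Type*} [MeasurableSpace α]

noncomputable def tvDist (ρ π : Measure α) : ℝ :=
  ⨆ A : {A : Set α // MeasurableSet A}, |(ρ A.1).toReal - (π A.1).toReal|

lemma one_le_tvDist_of_measure_eq_one_of_measure_eq_zero {ρ π : Measure α}
    [IsProbabilityMeasure ρ] [IsProbabilityMeasure π] {A : Set α} (hA : MeasurableSet A)
    (hρ : ρ A = 1) (hπ : π A = 0) : 1 ≤ tvDist ρ π := by
  have hbdd : BddAbove (Set.range fun B : {B : Set α // MeasurableSet B} =>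
      |(ρ B.1).toReal - (π B.1).toReal|) := by
    refine ⟨1, ?_⟩
    rintro _ ⟨B, rfl⟩
    exact abs_sub_le_of_nonneg_of_le measureReal_nonneg measureReal_le_one
      measureReal_nonneg measureReal_le_one
  calc (1 : ℝ) = |(ρ A).toReal - (π A).toReal| := by simp [hρ, hπ]
    _ ≤ tvDist ρ π := le_ciSup hbdd ⟨A, hA⟩

lemma not_tendsto_tvDist_zero_of_measure_eq_one_of_measure_eq_zero {β : Type*} {l : Filter β}
    [l.NeBot] {ρ : β → Measure α} [∀ t, IsProbabilityMeasure (ρ t)] {π : Measure α}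
    [IsProbabilityMeasure π] {A : Set α} (hA : MeasurableSet A) (hρ : ∀ t, ρ t A = 1)
    (hπ : π A = 0) : ¬ Tendsto (fun t => tvDist (ρ t) π) l (nhds 0) := fun htends =>
  absurd (ge_of_tendsto' htends fun t =>
    one_le_tvDist_of_measure_eq_one_of_measure_eq_zero hA (hρ t) hπ) (by norm_num)

end TotalVariation

theorem warpU_pure_moves_reducible_general
    (d K : ℕ)
    (μv : Fin K → (Fin d → ℝ)) (θ0 : Fin d → ℝ)
    (F H : Fin K → (Fin d → ℝ) → (Fin d → ℝ))
    (hF : F = fun k θ => θ - μv k) (hH : H = fun k θs => θs + μv k)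
    (G : Fin K → Fin K → (Fin d → ℝ) → (Fin d → ℝ))
    (hG : G = fun ψ' ψ θ => H ψ' (F ψ θ))
    (L : Set (Fin d → ℝ))
    (hL : L = {θ | ∃ j : Fin K → ℤ, θ = θ0 + ∑ k, (j k : ℝ) • μv k}) :
    (∀ ψ' ψ θ, G ψ' ψ θ = θ - μv ψ + μv ψ') ∧
    (∀ (a b : ℕ → Fin K) (orbit : ℕ → (Fin d → ℝ)),
      orbit 0 = θ0 → (∀ t, orbit (t + 1) = G (b t) (a t) (orbit t)) →
      ∀ t, orbit t ∈ L) ∧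
    L.Countable ∧
    (∀ (π : Measure (Fin d → ℝ)) (Ω : Set (Fin d → ℝ)),
      IsCompact Ω → π Ω = 1 → IsProbabilityMeasure π → (∀ x, π {x} = 0) →
      ∀ ρ : ℕ → Measure (Fin d → ℝ), (∀ t, IsProbabilityMeasure (ρ t)) →
        (∀ t, ρ t L = 1) →
        ¬ Tendsto (fun t => ⨆ A : {A : Set (Fin d → ℝ) // MeasurableSet A},
            |((ρ t) A.1).toReal - (π A.1).toReal|) atTop (nhds 0)) := by
  subst hF hH hG hL
  have hcount := countable_affineLattice θ0 μv
  refine ⟨fun _ _ _ => rfl, fun a b _ h₀ hstep => orbit_mem_affineLattice a b h₀ hstep,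
    hcount, ?_⟩
  intro π _ _ _ _ hatoms ρ _ hρ
  have : NullSingletonClass π := ⟨hatoms⟩
  exact not_tendsto_tvDist_zero_of_measure_eq_one_of_measure_eq_zero hcount.measurableSet hρ
    (hcount.measure_zero π)

/-- Reducibility of pure Warp-U moves with equal unit scales: when
`φ_mix(θ) = (1/K) ∑ₖ φ(θ − μ_k)` (all scale matrices the identity), each composed
transformation `G_{ψ',ψ} = H_{ψ'} ∘ F_ψ` is the translation `θ ↦ θ − μ_ψ + μ_{ψ'}`; for
any starting point `θ₀` the chain generated by repeatedly applying such maps (without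
any Metropolis step) can only visit points of the countable lattice
`{θ₀ + j₁μ₁ + ⋯ + j_Kμ_K : jₖ ∈ ℤ}`; and if the target `π` is non-atomic with compact
support `Ω`, then no sequence of distributions concentrated on the lattice (in
particular the law of the chain) can converge to `π` in total variation. -/
theorem warpU_pure_moves_reducible
    (d K : ℕ) (hd : 0 < d) (hK : 0 < K)
    (μv : Fin K → (Fin d → ℝ)) (θ0 : Fin d → ℝ)
    (F H : Fin K → (Fin d → ℝ) → (Fin d → ℝ))
    (hF : F = fun k θ => θ - μv k) (hH : H = fun k θs => θs + μv k)
    (G : Fin K → Fin K → (Fin d → ℝ) → (Fin d → ℝ))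
    (hG : G = fun ψ' ψ θ => H ψ' (F ψ θ))
    (L : Set (Fin d → ℝ))
    (hL : L = {θ | ∃ j : Fin K → ℤ, θ = θ0 + ∑ k, (j k : ℝ) • μv k}) :
    (∀ ψ' ψ θ, G ψ' ψ θ = θ - μv ψ + μv ψ') ∧
    (∀ (a b : ℕ → Fin K) (orbit : ℕ → (Fin d → ℝ)),
      orbit 0 = θ0 → (∀ t, orbit (t + 1) = G (b t) (a t) (orbit t)) →
      ∀ t, orbit t ∈ L) ∧
    L.Countable ∧
    (∀ (π : Measure (Fin d → ℝ)) (Ω : Set (Fin d → ℝ)),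
      IsCompact Ω → π Ω = 1 → IsProbabilityMeasure π → (∀ x, π {x} = 0) →
      ∀ ρ : ℕ → Measure (Fin d → ℝ), (∀ t, IsProbabilityMeasure (ρ t)) →
        (∀ t, ρ t L = 1) →
        ¬ Tendsto (fun t => ⨆ A : {A : Set (Fin d → ℝ) // MeasurableSet A},
            |((ρ t) A.1).toReal - (π A.1).toReal|) atTop (nhds 0)) :=
  warpU_pure_moves_reducible_general d K μv θ0 F H hF hH G hG L hL
end

section
/- Geometric tail of meeting time implies finite expectation of the bias-correction term: under R1 and R2 above (P(τ > t) ≤ C δ^t with δ ∈ (0,1), and sup_t E[|h(X_t)|^{2+η}] ≤ D), the random sum Σ_{t=l+1}^{τ−1} |h(X_t) − h(Y_{t−1})| has finite expectation. -/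
open MeasureTheory Filter

private lemma key_ineq {a M p : ℝ} (ha : 0 ≤ a) (hM : 0 < M) (hp : 1 ≤ p) :
    a ≤ a ^ p / M ^ (p - 1) + M := by
  rcases le_or_gt a M with hc | hc
  · have h0 : (0:ℝ) ≤ a ^ p / M ^ (p - 1) :=
      div_nonneg (Real.rpow_nonneg ha p) (Real.rpow_nonneg hM.le _)
    linarith
  · have ha' : 0 < a := hM.trans hc
    have h1 : (1:ℝ) ≤ (a / M) ^ (p - 1) := by
      have := Real.rpow_le_rpow (le_of_lt one_pos) ((one_le_div hM).mpr hc.le) (by linarith : (0:ℝ) ≤ p - 1)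
      simpa [Real.one_rpow] using this
    have h2 : a ^ p / M ^ (p - 1) = a * (a / M) ^ (p - 1) := by
      rw [Real.div_rpow ha hM.le, Real.rpow_sub ha', Real.rpow_one]
      have hMp : M ^ (p - 1) ≠ 0 := ne_of_gt (Real.rpow_pos_of_pos hM _)
      field_simp
    have : a ≤ a ^ p / M ^ (p - 1) := by
      rw [h2]
      nlinarith
    linarith

private lemma rpow_sub_le {a b p : ℝ} (hp : 0 ≤ p) :
    |a - b| ^ p ≤ 2 ^ p * (|a| ^ p + |b| ^ p) := by
  have h1 : |a - b| ≤ 2 * max |a| |b| := by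
    have := abs_sub a b
    have : |a - b| ≤ |a| + |b| := abs_sub _ _
    have h2 : |a| ≤ max |a| |b| := le_max_left _ _
    have h3 : |b| ≤ max |a| |b| := le_max_right _ _
    linarith
  have h2 : |a - b| ^ p ≤ (2 * max |a| |b|) ^ p :=
    Real.rpow_le_rpow (abs_nonneg _) h1 hp
  have hm : (0:ℝ) ≤ max |a| |b| := le_trans (abs_nonneg a) (le_max_left _ _)
  have h3 : (2 * max |a| |b|) ^ p = 2 ^ p * (max |a| |b|) ^ p :=
    Real.mul_rpow (by norm_num) hm
  have h4 : (max |a| |b|) ^ p ≤ |a| ^ p + |b| ^ p := by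
    rcases max_cases |a| |b| with ⟨he, _⟩ | ⟨he, _⟩ <;> rw [he]
    · nlinarith [Real.rpow_nonneg (abs_nonneg b) p]
    · nlinarith [Real.rpow_nonneg (abs_nonneg a) p]
  calc |a - b| ^ p ≤ 2 ^ p * (max |a| |b|) ^ p := by rw [← h3]; exact h2
    _ ≤ 2 ^ p * (|a| ^ p + |b| ^ p) := by
        have : (0:ℝ) < 2 ^ p := Real.rpow_pos_of_pos (by norm_num) p
        nlinarith

/-- Geometric tail of the meeting time implies finite expectation of the bias-correction
term: if `P(τ > t) ≤ C δ^t` with `δ ∈ (0,1)` and `sup_t E[|h(X_t)|^{2+η}] ≤ D` (and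
likewise for the second chain), then the random sum
`∑_{t=l+1}^{τ−1} |h(X_t) − h(Y_{t−1})|` has finite expectation. -/
theorem bias_correction_term_integrable
    {Ω Θ : Type*} [MeasurableSpace Ω] [MeasurableSpace Θ]
    (P : Measure Ω) [IsProbabilityMeasure P]
    (h : Θ → ℝ) (hh : Measurable h)
    (X Y : ℕ → Ω → Θ)
    (hXm : ∀ t, Measurable (X t)) (hYm : ∀ t, Measurable (Y t))
    (η D : ℝ) (hη : 0 < η)
    (hmomX : ∀ t, (∫ ω, |h (X t ω)| ^ (2 + η) ∂P) ≤ D)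
    (hmomY : ∀ t, (∫ ω, |h (Y t ω)| ^ (2 + η) ∂P) ≤ D)
    (hmomXint : ∀ t, Integrable (fun ω => |h (X t ω)| ^ (2 + η)) P)
    (hmomYint : ∀ t, Integrable (fun ω => |h (Y t ω)| ^ (2 + η)) P)
    (τ : Ω → ℕ) (hτm : Measurable τ)
    (C δ : ℝ) (hδ0 : 0 < δ) (hδ1 : δ < 1)
    (hR2 : ∀ t : ℕ, P {ω | t < τ ω} ≤ ENNReal.ofReal (C * δ ^ t))
    (l : ℕ) :
    Integrable (fun ω =>
      ∑ t ∈ Finset.Icc (l + 1) (τ ω - 1), |h (X t ω) - h (Y (t - 1) ω)|) P := by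
  set p : ℝ := 2 + η with hpdef
  have hp1 : (1:ℝ) ≤ p := by simp [hpdef]; linarith
  have hp0 : (0:ℝ) < p := by linarith
  -- the summand
  set Z : ℕ → Ω → ℝ := fun t ω => |h (X t ω) - h (Y (t - 1) ω)| with hZdef
  have hZnn : ∀ t ω, 0 ≤ Z t ω := fun t ω => abs_nonneg _
  have hZm : ∀ t, Measurable (Z t) := fun t =>
    ((hh.comp (hXm t)).sub (hh.comp (hYm (t - 1)))).abs
  -- measurability of the target
  have hFm : Measurable (fun ω => ∑ t ∈ Finset.Icc (l + 1) (τ ω - 1), Z t ω) := by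
    have h0 : ∀ n : ℕ, Measurable (fun ω : Ω => ∑ t ∈ Finset.Icc (l + 1) (n - 1), Z t ω) :=
      fun n => Finset.measurable_sum _ (fun t _ => hZm t)
    have h1 : Measurable (fun q : Ω × ℕ => ∑ t ∈ Finset.Icc (l + 1) (q.2 - 1), Z t q.1) :=
      measurable_from_prod_countable_left h0
    exact h1.comp (measurable_id.prodMk hτm)
  -- Z^p integrable and bounded
  have hD : 0 ≤ D :=
    le_trans (integral_nonneg (fun ω => Real.rpow_nonneg (abs_nonneg _) _)) (hmomX 0)
  have hgint : ∀ t, Integrable (fun ω => 2 ^ p * (|h (X t ω)| ^ p + |h (Y (t - 1) ω)| ^ p)) P :=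
    fun t => ((hmomXint t).add (hmomYint (t - 1))).const_mul _
  have hZp_m : ∀ t, Measurable (fun ω => Z t ω ^ p) := fun t => (Real.continuous_rpow_const hp0.le).measurable.comp (hZm t)
  have hZp_int : ∀ t, Integrable (fun ω => Z t ω ^ p) P := by
    intro t
    refine (hgint t).mono' (hZp_m t).aestronglyMeasurable ?_
    filter_upwards with ω
    rw [Real.norm_of_nonneg (Real.rpow_nonneg (hZnn t ω) p)]
    exact rpow_sub_le hp0.le
  set A : ℝ := 2 ^ p * (2 * D) with hAdef
  have hA0 : 0 ≤ A := by
    have : (0:ℝ) ≤ 2 ^ p := Real.rpow_nonneg (by norm_num) p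
    positivity
  have hZp_bd : ∀ t, ∫ ω, Z t ω ^ p ∂P ≤ A := by
    intro t
    have h1 : ∫ ω, Z t ω ^ p ∂P ≤ ∫ ω, 2 ^ p * (|h (X t ω)| ^ p + |h (Y (t - 1) ω)| ^ p) ∂P :=
      integral_mono (hZp_int t) (hgint t) (fun ω => rpow_sub_le hp0.le)
    have h2 : ∫ ω, 2 ^ p * (|h (X t ω)| ^ p + |h (Y (t - 1) ω)| ^ p) ∂P
        = 2 ^ p * ((∫ ω, |h (X t ω)| ^ p ∂P) + ∫ ω, |h (Y (t - 1) ω)| ^ p ∂P) := by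
      rw [integral_const_mul, integral_add (hmomXint t) (hmomYint (t - 1))]
    have h3 : (∫ ω, |h (X t ω)| ^ p ∂P) + (∫ ω, |h (Y (t - 1) ω)| ^ p ∂P) ≤ 2 * D := by
      have := hmomX t; have := hmomY (t - 1); simp only [hpdef] at *; linarith
    have h4 : (0:ℝ) ≤ 2 ^ p := Real.rpow_nonneg (by norm_num) p
    calc ∫ ω, Z t ω ^ p ∂P ≤ _ := h1
      _ = _ := h2
      _ ≤ A := by rw [hAdef]; nlinarith
  -- Z integrable
  have hZ_int : ∀ t, Integrable (Z t) P := by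
    intro t
    refine ((hZp_int t).add (integrable_const 1)).mono' (hZm t).aestronglyMeasurable ?_
    filter_upwards with ω
    rw [Real.norm_of_nonneg (hZnn t ω)]
    have := key_ineq (hZnn t ω) one_pos hp1
    simpa [Real.one_rpow] using this
  -- the sets and indicator functions
  set S : ℕ → Set Ω := fun t => {ω | l + 1 ≤ t ∧ t ≤ τ ω - 1} with hSdef
  have hSm : ∀ t, MeasurableSet (S t) := by
    intro t
    have : S t = τ ⁻¹' {n | l + 1 ≤ t ∧ t ≤ n - 1} := rfl
    rw [this]
    exact hτm trivial
  have hS_sub : ∀ t, S t ⊆ {ω | t < τ ω} := by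
    intro t ω hω
    obtain ⟨h1, h2⟩ := hω
    simp only [Set.mem_setOf_eq]
    omega
  set f : ℕ → Ω → ℝ := fun t => (S t).indicator (Z t) with hfdef
  have hfnn : ∀ t ω, 0 ≤ f t ω := fun t ω => Set.indicator_nonneg (fun ω _ => hZnn t ω) ω
  have hfm : ∀ t, Measurable (f t) := fun t => (hZm t).indicator (hSm t)
  have hf_int : ∀ t, Integrable (f t) P := fun t => (hZ_int t).indicator (hSm t)
  -- constants
  set C' : ℝ := max C 1 with hC'def
  have hC'1 : (1:ℝ) ≤ C' := le_max_right _ _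
  have hPb : ∀ t : ℕ, (P (S t)).toReal ≤ C' * δ ^ t := by
    intro t
    have h1 : P (S t) ≤ P {ω | t < τ ω} := measure_mono (hS_sub t)
    have h2 : P {ω | t < τ ω} ≤ ENNReal.ofReal (C' * δ ^ t) := by
      refine le_trans (hR2 t) (ENNReal.ofReal_le_ofReal ?_)
      have hdt : (0:ℝ) ≤ δ ^ t := pow_nonneg hδ0.le t
      rw [hC'def]
      exact mul_le_mul_of_nonneg_right (le_max_left C 1) hdt
    have h3 : (0:ℝ) ≤ C' * δ ^ t := by positivity
    exact ENNReal.toReal_le_of_le_ofReal h3 (h1.trans h2)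
  -- exponents
  set s : ℝ := (p - 1) / p with hsdef
  have hs0 : 0 < s := div_pos (by linarith) hp0
  set M : ℕ → ℝ := fun t => δ ^ (s * t - t) with hMdef
  have hM0 : ∀ t, 0 < M t := fun t => Real.rpow_pos_of_pos hδ0 _
  -- per-term integral bound
  set b : ℕ → ℝ := fun t => (A + C') * δ ^ (s * t) with hbdef
  have hbnn : ∀ t, 0 ≤ b t := by
    intro t
    simp only [hbdef]
    have h1 := Real.rpow_nonneg hδ0.le (s * (t:ℝ))
    nlinarith
  have hbound : ∀ t, ∫ ω, f t ω ∂P ≤ b t := by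
    intro t
    -- pointwise domination
    have hdom : ∀ ω, f t ω ≤ Z t ω ^ p / (M t) ^ (p - 1) + (S t).indicator (fun _ => M t) ω := by
      intro ω
      by_cases hω : ω ∈ S t
      · rw [hfdef]
        simp only [Set.indicator_of_mem hω]
        exact key_ineq (hZnn t ω) (hM0 t) hp1
      · rw [hfdef]
        simp only [Set.indicator_of_notMem hω, add_zero]
        exact div_nonneg (Real.rpow_nonneg (hZnn t ω) p) (Real.rpow_nonneg (hM0 t).le _)
    have hrhs_int : Integrable (fun ω => Z t ω ^ p / (M t) ^ (p - 1)
        + (S t).indicator (fun _ => M t) ω) P :=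
      ((hZp_int t).div_const _).add ((integrable_const (M t)).indicator (hSm t))
    have h1 : ∫ ω, f t ω ∂P ≤ ∫ ω, (Z t ω ^ p / (M t) ^ (p - 1)
        + (S t).indicator (fun _ => M t) ω) ∂P :=
      integral_mono (hf_int t) hrhs_int hdom
    have h2 : ∫ ω, (Z t ω ^ p / (M t) ^ (p - 1) + (S t).indicator (fun _ => M t) ω) ∂P
        = (∫ ω, Z t ω ^ p ∂P) / (M t) ^ (p - 1) + (P (S t)).toReal * M t := by
      rw [integral_add ((hZp_int t).div_const _) ((integrable_const (M t)).indicator (hSm t)),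
        integral_div, integral_indicator_const _ (hSm t), smul_eq_mul, measureReal_def]
    -- rpow algebra
    have hMe : (M t) ^ (p - 1) = δ ^ (-(s * t)) := by
      rw [hMdef, ← Real.rpow_mul hδ0.le]
      congr 1
      rw [hsdef]
      field_simp
      ring
    have hMd : M t * δ ^ t = δ ^ (s * t) := by
      rw [hMdef, ← Real.rpow_natCast δ t, ← Real.rpow_add hδ0]
      ring_nf
    have h3 : (∫ ω, Z t ω ^ p ∂P) / (M t) ^ (p - 1) ≤ A * δ ^ (s * t) := by
      rw [hMe, Real.rpow_neg hδ0.le, div_eq_mul_inv, inv_inv]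
      have := Real.rpow_nonneg hδ0.le (s * t)
      nlinarith [hZp_bd t]
    have h4 : (P (S t)).toReal * M t ≤ C' * δ ^ (s * t) := by
      have hMt : 0 < M t := hM0 t
      have := hPb t
      calc (P (S t)).toReal * M t ≤ (C' * δ ^ t) * M t := by nlinarith
        _ = C' * (M t * δ ^ t) := by ring
        _ = C' * δ ^ (s * t) := by rw [hMd]
    calc ∫ ω, f t ω ∂P ≤ _ := h1
      _ = _ := h2
      _ ≤ A * δ ^ (s * t) + C' * δ ^ (s * t) := add_le_add h3 h4
      _ = b t := by simp only [hbdef]; ring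
  -- summability of the bound
  have hb_sum : Summable b := by
    have hrt : ∀ t : ℕ, δ ^ (s * t) = (δ ^ s) ^ t := by
      intro t
      rw [← Real.rpow_natCast (δ ^ s) t, ← Real.rpow_mul hδ0.le]
    have hr0 : 0 ≤ δ ^ s := Real.rpow_nonneg hδ0.le s
    have hr1 : δ ^ s < 1 := Real.rpow_lt_one hδ0.le hδ1 hs0
    have : Summable (fun t : ℕ => (A + C') * (δ ^ s) ^ t) :=
      (summable_geometric_of_lt_one hr0 hr1).mul_left _
    refine this.congr fun t => ?_
    simp only [hbdef]
    rw [hrt t]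
  -- finish: finite lintegral
  refine ⟨hFm.aestronglyMeasurable, (hasFiniteIntegral_iff_ofReal
    (Filter.Eventually.of_forall (fun ω => Finset.sum_nonneg (fun t _ => hZnn t ω)))).mpr ?_⟩
  have hptw : ∀ ω, ENNReal.ofReal (∑ t ∈ Finset.Icc (l + 1) (τ ω - 1), Z t ω)
      ≤ ∑' t, ENNReal.ofReal (f t ω) := by
    intro ω
    rw [ENNReal.ofReal_sum_of_nonneg (fun t _ => hZnn t ω)]
    have heq : ∀ t ∈ Finset.Icc (l + 1) (τ ω - 1),
        ENNReal.ofReal (Z t ω) = ENNReal.ofReal (f t ω) := by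
      intro t ht
      rw [Finset.mem_Icc] at ht
      have : ω ∈ S t := ⟨ht.1, ht.2⟩
      rw [hfdef]; simp [Set.indicator_of_mem this]
    rw [Finset.sum_congr rfl heq]
    exact ENNReal.sum_le_tsum _
  calc ∫⁻ ω, ENNReal.ofReal (∑ t ∈ Finset.Icc (l + 1) (τ ω - 1), Z t ω) ∂P
      ≤ ∫⁻ ω, ∑' t, ENNReal.ofReal (f t ω) ∂P := lintegral_mono hptw
    _ = ∑' t, ∫⁻ ω, ENNReal.ofReal (f t ω) ∂P :=
        lintegral_tsum (fun t => ((hfm t).ennreal_ofReal).aemeasurable)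
    _ ≤ ∑' t, ENNReal.ofReal (b t) := by
        refine ENNReal.tsum_le_tsum fun t => ?_
        rw [← ofReal_integral_eq_lintegral_ofReal (hf_int t)
          (Filter.Eventually.of_forall (hfnn t))]
        exact ENNReal.ofReal_le_ofReal (hbound t)
    _ = ENNReal.ofReal (∑' t, b t) := (ENNReal.ofReal_tsum_of_nonneg hbnn hb_sum).symm
    _ < ⊤ := ENNReal.ofReal_lt_top
end
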